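/- Assume the Herglotz field setup with N real fields and let ξ : ℝ^d → ℝ^d and η = (η^1,…,η^N) : ℝ^d → ℝ^N be of class C¹. Suppose each field φ^i satisfies the generalized Euler–Lagrange equation, the infinitesimal invariance condition holds (for all x: Σ_ν (∂L/∂x^ν)(z(x)) ξ^ν(x) + Σ_i (∂L/∂u_i)(z(x)) η^i(x) + Σ_{ν,i} (∂L/∂p^i_ν)(z(x)) ( ∂_ν η^i(x) − Σ_μ ∂_μ φ^i(x) ∂_ν ξ^μ(x) ) + L(z(x)) Σ_ν ∂_ν ξ^ν(x) = 0), and the canonical gauge condition holds: for all ν and x, ∂_ν f(x) Σ_μ ∂_μ s^μ(x) = Σ_μ ∂_μ f(x) ∂_ν s^μ(x). Then the current J^ν(x) := ( Σ_i (∂L/∂p^i_ν)(z(x)) η^i(x) + L(z(x)) ξ^ν(x) − Σ_{i,μ} (∂L/∂p^i_ν)(z(x)) ∂_μ φ^i(x) ξ^μ(x) ) e^{−f(x)} satisfies Σ_ν ∂_ν J^ν(x) = 0 for all x (Generalized Noether Theorem for several fields). -/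

import Mathlib

/-- Partial derivative `∂_ν g` of a scalar field on `ℝ^d`. -/
noncomputable def pd {d : ℕ} (g : (Fin d → ℝ) → ℝ) (ν : Fin d) (x : Fin d → ℝ) : ℝ :=
  fderiv ℝ g x (Pi.single ν 1)

/-- `∂L/∂x^ν` for a Lagrangian `L(x, u, p, s)` on `ℝ^d × ℝ^N × (ℝ^d)^N × ℝ^d`. -/
noncomputable def pLx {d N : ℕ}
    (L : (Fin d → ℝ) × (Fin N → ℝ) × (Fin N → Fin d → ℝ) × (Fin d → ℝ) → ℝ)
    (ν : Fin d)
    (z : (Fin d → ℝ) × (Fin N → ℝ) × (Fin N → Fin d → ℝ) × (Fin d → ℝ)) : ℝ :=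
  fderiv ℝ (fun y => L (y, z.2.1, z.2.2.1, z.2.2.2)) z.1 (Pi.single ν 1)

/-- `∂L/∂u_i` for a Lagrangian `L(x, u, p, s)`. -/
noncomputable def pLu {d N : ℕ}
    (L : (Fin d → ℝ) × (Fin N → ℝ) × (Fin N → Fin d → ℝ) × (Fin d → ℝ) → ℝ)
    (i : Fin N)
    (z : (Fin d → ℝ) × (Fin N → ℝ) × (Fin N → Fin d → ℝ) × (Fin d → ℝ)) : ℝ :=
  fderiv ℝ (fun w => L (z.1, w, z.2.2.1, z.2.2.2)) z.2.1 (Pi.single i 1)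

/-- `∂L/∂p^i_ν` for a Lagrangian `L(x, u, p, s)`. -/
noncomputable def pLp {d N : ℕ}
    (L : (Fin d → ℝ) × (Fin N → ℝ) × (Fin N → Fin d → ℝ) × (Fin d → ℝ) → ℝ)
    (i : Fin N) (ν : Fin d)
    (z : (Fin d → ℝ) × (Fin N → ℝ) × (Fin N → Fin d → ℝ) × (Fin d → ℝ)) : ℝ :=
  fderiv ℝ (fun q => L (z.1, z.2.1, q, z.2.2.2)) z.2.2.1 (Pi.single i (Pi.single ν 1))

/-- `∂L/∂s_ν` for a Lagrangian `L(x, u, p, s)`. -/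
noncomputable def pLs {d N : ℕ}
    (L : (Fin d → ℝ) × (Fin N → ℝ) × (Fin N → Fin d → ℝ) × (Fin d → ℝ) → ℝ)
    (ν : Fin d)
    (z : (Fin d → ℝ) × (Fin N → ℝ) × (Fin N → Fin d → ℝ) × (Fin d → ℝ)) : ℝ :=
  fderiv ℝ (fun w => L (z.1, z.2.1, z.2.2.1, w)) z.2.2.2 (Pi.single ν 1)

/-!
Write the current as `J^ν = A^ν e^{-f}` with `A^ν = Σ_i L_{p^i_ν} Q^i + L ξ^ν`, where
`Q^i = η^i - Σ_μ ∂_μ φ^i ξ^μ` is the characteristic of the symmetry. Since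
`∂_ν J^ν = (∂_ν A^ν - ∂_ν f A^ν) e^{-f}`, it suffices to show `Σ_ν ∂_ν A^ν = Σ_ν ∂_ν f A^ν`.
Expand the left side by the Leibniz rule and the chain rule for `x ↦ L(z(x))`. The
Euler–Lagrange equations replace `Σ_ν ∂_ν L_{p^i_ν}` by `L_{u_i} + Σ_ν ∂_ν f L_{p^i_ν}`; the
gradient, gauge and Herglotz conditions turn the `s`-part `Σ_μ L_{s_μ} ∂_ν s^μ` of the chain rule
into `∂_ν f L`; the second derivatives of `φ` cancel by their symmetry; and what is left is the
invariance condition plus exactly `Σ_ν ∂_ν f A^ν`.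
-/

open Finset

section PartialDerivatives
variable {d : ℕ} {g h : (Fin d → ℝ) → ℝ} {x : Fin d → ℝ}

theorem pd_add (hg : DifferentiableAt ℝ g x) (hh : DifferentiableAt ℝ h x) (ν : Fin d) :
    pd (fun y => g y + h y) ν x = pd g ν x + pd h ν x := by
  simp [pd, fderiv_fun_add hg hh]

theorem pd_sub (hg : DifferentiableAt ℝ g x) (hh : DifferentiableAt ℝ h x) (ν : Fin d) :
    pd (fun y => g y - h y) ν x = pd g ν x - pd h ν x := by
  simp [pd, fderiv_fun_sub hg hh]

theorem pd_mul (hg : DifferentiableAt ℝ g x) (hh : DifferentiableAt ℝ h x) (ν : Fin d) :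
    pd (fun y => g y * h y) ν x = pd g ν x * h x + g x * pd h ν x := by
  simp only [pd, fderiv_fun_mul hg hh, add_apply, smul_apply, smul_eq_mul]
  ring

theorem pd_sum {ι : Type*} {t : Finset ι} {G : ι → (Fin d → ℝ) → ℝ}
    (hG : ∀ i ∈ t, DifferentiableAt ℝ (G i) x) (ν : Fin d) :
    pd (fun y => ∑ i ∈ t, G i y) ν x = ∑ i ∈ t, pd (G i) ν x := by
  simp [pd, fderiv_fun_sum hG]

theorem pd_mul_exp_neg (hg : DifferentiableAt ℝ g x) (hh : DifferentiableAt ℝ h x) (ν : Fin d) :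
    pd (fun y => g y * Real.exp (-h y)) ν x = (pd g ν x - pd h ν x * g x) * Real.exp (-h x) := by
  have hexp : HasFDerivAt (fun y => Real.exp (-h y)) (Real.exp (-h x) • -fderiv ℝ h x) x :=
    hh.hasFDerivAt.neg.exp
  rw [pd_mul hg hexp.differentiableAt]
  simp only [pd, hexp.fderiv, smul_apply, neg_apply, smul_eq_mul]
  ring

theorem contDiff_pd {n : WithTop ℕ∞} (hg : ContDiff ℝ (n + 1) g) (μ : Fin d) :
    ContDiff ℝ n (pd g μ) :=
  (hg.fderiv_right le_rfl).clm_apply contDiff_const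

theorem pd_pd (hg : DifferentiableAt ℝ (fderiv ℝ g) x) (μ ν : Fin d) :
    pd (pd g μ) ν x = fderiv ℝ (fderiv ℝ g) x (Pi.single ν 1) (Pi.single μ 1) := by
  change fderiv ℝ (fun y => fderiv ℝ g y (Pi.single μ 1)) x _ = _
  rw [fderiv_clm_apply hg (differentiableAt_const _)]
  simp

theorem pd_comm (hg : ContDiff ℝ 2 g) (μ ν : Fin d) :
    pd (pd g μ) ν x = pd (pd g ν) μ x := by
  have hg' : Differentiable ℝ (fderiv ℝ g) :=
    (hg.fderiv_right (le_refl 2)).differentiable one_ne_zero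
  rw [pd_pd (hg' x), pd_pd (hg' x)]
  exact second_derivative_symmetric (fun y => (hg.differentiable two_ne_zero y).hasFDerivAt)
    (hg' x).hasFDerivAt _ _

theorem pd_comp {E : Type*} [NormedAddCommGroup E] [NormedSpace ℝ E] {L : E → ℝ}
    {G : (Fin d → ℝ) → E} (hL : DifferentiableAt ℝ L (G x)) (hG : DifferentiableAt ℝ G x)
    (ν : Fin d) :
    pd (fun y => L (G y)) ν x = fderiv ℝ L (G x) (fderiv ℝ G x (Pi.single ν 1)) := by
  rw [pd, fderiv_fun_comp x hL hG]; rfl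

end PartialDerivatives

section Coordinates
variable {ι κ M : Type*} [Fintype ι] [DecidableEq ι] [Fintype κ] [DecidableEq κ]
  [AddCommMonoid M] [Module ℝ M] [TopologicalSpace M]

theorem ContinuousLinearMap.apply_eq_sum_smul_single (T : (ι → ℝ) →L[ℝ] M) (v : ι → ℝ) :
    T v = ∑ i, v i • T (Pi.single i 1) := by
  conv_lhs => rw [← Finset.univ_sum_single v, map_sum]
  simp [← map_smul, ← Pi.single_smul]

theorem ContinuousLinearMap.apply_eq_sum_sum_smul_single (T : (ι → κ → ℝ) →L[ℝ] M)
    (c : ι → κ → ℝ) : T c = ∑ i, ∑ j, c i j • T (Pi.single i (Pi.single j 1)) := by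
  conv_lhs => rw [← Finset.univ_sum_single c, map_sum]
  refine Finset.sum_congr rfl fun i _ => ?_
  exact (T.comp (ContinuousLinearMap.single ℝ (fun _ => κ → ℝ) i)).apply_eq_sum_smul_single (c i)

end Coordinates

section ProductDomain
variable {E F G : Type*} [NormedAddCommGroup E] [NormedSpace ℝ E] [NormedAddCommGroup F]
  [NormedSpace ℝ F] [NormedAddCommGroup G] [NormedSpace ℝ G]

theorem fderiv_apply_prod {L : E × F → G} {w : E × F} (hL : DifferentiableAt ℝ L w) (v : E × F) :
    fderiv ℝ L w v =
      fderiv ℝ (fun a => L (a, w.2)) w.1 v.1 + fderiv ℝ (fun b => L (w.1, b)) w.2 v.2 := by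
  have h₁ : HasFDerivAt (fun a => L (a, w.2)) (fderiv ℝ L w ∘L .inl ℝ E F) w.1 :=
    hL.hasFDerivAt.comp w.1 (hasFDerivAt_prodMk_left w.1 w.2)
  have h₂ : HasFDerivAt (fun b => L (w.1, b)) (fderiv ℝ L w ∘L .inr ℝ E F) w.2 :=
    hL.hasFDerivAt.comp w.2 (hasFDerivAt_prodMk_right w.1 w.2)
  rw [h₁.fderiv, h₂.fderiv, ContinuousLinearMap.comp_inl_add_comp_inr]

theorem DifferentiableAt.comp_prodMk_right {L : E × F → G} {w : E × F}
    (hL : DifferentiableAt ℝ L w) : DifferentiableAt ℝ (fun b => L (w.1, b)) w.2 :=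
  hL.comp w.2 ((differentiableAt_const _).prodMk differentiableAt_id)

end ProductDomain

section Lagrangian
variable {d N : ℕ} {L : (Fin d → ℝ) × (Fin N → ℝ) × (Fin N → Fin d → ℝ) × (Fin d → ℝ) → ℝ}
  {w : (Fin d → ℝ) × (Fin N → ℝ) × (Fin N → Fin d → ℝ) × (Fin d → ℝ)}

theorem fderiv_lagrangian_apply (hL : DifferentiableAt ℝ L w)
    (v : (Fin d → ℝ) × (Fin N → ℝ) × (Fin N → Fin d → ℝ) × (Fin d → ℝ)) :
    fderiv ℝ L w v = (∑ ν, v.1 ν * pLx L ν w) + (∑ i, v.2.1 i * pLu L i w)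
      + (∑ i, ∑ ν, v.2.2.1 i ν * pLp L i ν w) + (∑ ν, v.2.2.2 ν * pLs L ν w) := by
  have hL₂ := hL.comp_prodMk_right
  rw [fderiv_apply_prod hL, fderiv_apply_prod hL₂, fderiv_apply_prod hL₂.comp_prodMk_right]
  simp only [ContinuousLinearMap.apply_eq_sum_smul_single _ v.1,
    ContinuousLinearMap.apply_eq_sum_smul_single _ v.2.1,
    ContinuousLinearMap.apply_eq_sum_sum_smul_single _ v.2.2.1,
    ContinuousLinearMap.apply_eq_sum_smul_single _ v.2.2.2, smul_eq_mul, add_assoc]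
  congr 2

end Lagrangian

section Prolongation
variable {d N : ℕ} {φ : Fin N → (Fin d → ℝ) → ℝ} {s : (Fin d → ℝ) → Fin d → ℝ}
  {x : Fin d → ℝ}

/-- The paper's `z(x)`. -/
noncomputable def prolongation (φ : Fin N → (Fin d → ℝ) → ℝ) (s : (Fin d → ℝ) → Fin d → ℝ)
    (x : Fin d → ℝ) : (Fin d → ℝ) × (Fin N → ℝ) × (Fin N → Fin d → ℝ) × (Fin d → ℝ) :=
  (x, fun i => φ i x, fun i ν => pd (φ i) ν x, s x)

theorem hasFDerivAt_prolongation (hφ : ∀ i, ContDiff ℝ 2 (φ i)) (hs : Differentiable ℝ s)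
    (x : Fin d → ℝ) :
    HasFDerivAt (prolongation φ s) ((ContinuousLinearMap.id ℝ _).prod
      ((ContinuousLinearMap.pi fun i => fderiv ℝ (φ i) x).prod
        ((ContinuousLinearMap.pi fun i =>
            ContinuousLinearMap.pi fun μ => fderiv ℝ (pd (φ i) μ) x).prod
          (ContinuousLinearMap.pi fun μ => fderiv ℝ (fun y => s y μ) x)))) x :=
  (hasFDerivAt_id x).prodMk
    ((hasFDerivAt_pi.2 fun i => ((hφ i).differentiable two_ne_zero x).hasFDerivAt).prodMk
      ((hasFDerivAt_pi.2 fun i => hasFDerivAt_pi.2 fun μ =>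
          ((contDiff_pd (hφ i) μ).differentiable one_ne_zero x).hasFDerivAt).prodMk
        (hasFDerivAt_pi.2 fun μ => (differentiable_pi.1 hs μ x).hasFDerivAt)))

theorem differentiable_prolongation (hφ : ∀ i, ContDiff ℝ 2 (φ i)) (hs : Differentiable ℝ s) :
    Differentiable ℝ (prolongation φ s) :=
  fun x => (hasFDerivAt_prolongation hφ hs x).differentiableAt

theorem pd_comp_prolongation
    {L : (Fin d → ℝ) × (Fin N → ℝ) × (Fin N → Fin d → ℝ) × (Fin d → ℝ) → ℝ}
    (hL : DifferentiableAt ℝ L (prolongation φ s x)) (hφ : ∀ i, ContDiff ℝ 2 (φ i))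
    (hs : Differentiable ℝ s) (ν : Fin d) :
    pd (fun y => L (prolongation φ s y)) ν x = pLx L ν (prolongation φ s x)
      + (∑ i, pd (φ i) ν x * pLu L i (prolongation φ s x))
      + (∑ i, ∑ μ, pd (pd (φ i) μ) ν x * pLp L i μ (prolongation φ s x))
      + (∑ μ, pd (fun y => s y μ) ν x * pLs L μ (prolongation φ s x)) := by
  rw [pd_comp hL (differentiable_prolongation hφ hs x),
    (hasFDerivAt_prolongation hφ hs x).fderiv, fderiv_lagrangian_apply hL]
  simp [Pi.single_apply, pd]

end Prolongation

theorem sum_sum_sum_swap {ι κ R : Type*} [Fintype ι] [Fintype κ] [AddCommMonoid R]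
    (T : ι → κ → κ → R) :
    ∑ ν, ∑ i, ∑ μ, T i μ ν = ∑ ν, ∑ i, ∑ μ, T i ν μ := by
  rw [sum_comm]
  simp_rw [sum_comm (s := (univ : Finset κ)) (t := univ) (f := fun ν μ => T _ μ ν)]
  rw [sum_comm]

/-- Pointwise values: `dφ i μ = ∂_μ φ^i`, `d2φ i μ ν = ∂_ν ∂_μ φ^i`, `dξ μ ν = ∂_ν ξ^μ`,
`dη i ν = ∂_ν η^i`, `df ν = ∂_ν f`, and `dP i ν = ∂_ν P^i_ν` (no summation). -/
theorem noether_identity {ι κ R : Type*} [Fintype ι] [Fintype κ] [CommRing R]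
    {df ξ Lx : κ → R} {ℓ : R} {Lu η : ι → R} {P dφ dη dP : ι → κ → R} {dξ : κ → κ → R}
    {d2φ : ι → κ → κ → R}
    (hd2φ : ∀ i μ ν, d2φ i μ ν = d2φ i ν μ)
    (hEL : ∀ i, ∑ ν, dP i ν = Lu i + ∑ ν, df ν * P i ν)
    (hinv : ∑ ν, Lx ν * ξ ν + ∑ i, Lu i * η i
      + ∑ ν, ∑ i, P i ν * (dη i ν - ∑ μ, dφ i μ * dξ μ ν) + ℓ * ∑ ν, dξ ν ν = 0) :
    ∑ ν, (∑ i, (dP i ν * (η i - ∑ μ, dφ i μ * ξ μ)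
        + P i ν * (dη i ν - ∑ μ, (d2φ i μ ν * ξ μ + dφ i μ * dξ μ ν)))
      + (Lx ν + ∑ i, dφ i ν * Lu i + ∑ i, ∑ μ, d2φ i μ ν * P i μ + df ν * ℓ) * ξ ν + ℓ * dξ ν ν)
    = ∑ ν, df ν * (∑ i, P i ν * (η i - ∑ μ, dφ i μ * ξ μ) + ℓ * ξ ν) := by
  have hdP : ∑ ν, ∑ i, dP i ν * (η i - ∑ μ, dφ i μ * ξ μ)
      = ∑ i, Lu i * (η i - ∑ μ, dφ i μ * ξ μ)
        + ∑ ν, df ν * ∑ i, P i ν * (η i - ∑ μ, dφ i μ * ξ μ) := by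
    rw [sum_comm]
    simp only [← sum_mul, hEL, add_mul, sum_add_distrib]
    simp only [sum_mul, mul_sum, mul_assoc]
    rw [sum_comm (s := univ)]
  have hLu : ∑ ν, (∑ i, dφ i ν * Lu i) * ξ ν = ∑ i, Lu i * ∑ μ, dφ i μ * ξ μ := by
    simp only [sum_mul, mul_sum]
    rw [sum_comm]
    exact sum_congr rfl fun i _ => sum_congr rfl fun ν _ => by ring
  have hd2φξ : ∑ ν, (∑ i, ∑ μ, d2φ i μ ν * P i μ) * ξ ν
      = ∑ ν, ∑ i, P i ν * ∑ μ, d2φ i μ ν * ξ μ := by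
    simp only [sum_mul, mul_sum]
    rw [sum_sum_sum_swap]
    exact sum_congr rfl fun ν _ => sum_congr rfl fun i _ => sum_congr rfl fun μ _ => by
      rw [hd2φ]; ring
  simp only [sum_add_distrib, add_mul, mul_add, sum_sub_distrib, mul_sub, ← mul_sum,
    mul_assoc] at hinv hdP ⊢
  linear_combination hinv + hdP + hLu + hd2φξ

section Current
variable {d N : ℕ} {P : Fin N → Fin d → (Fin d → ℝ) → ℝ} {ℓ f : (Fin d → ℝ) → ℝ}
  {φ η : Fin N → (Fin d → ℝ) → ℝ} {ξ : (Fin d → ℝ) → Fin d → ℝ} {x : Fin d → ℝ}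

theorem sum_pd_noether_current {F Lx : Fin d → ℝ} {Lu : Fin N → ℝ}
    (hP : ∀ i ν, Differentiable ℝ (P i ν)) (hℓ : Differentiable ℝ ℓ)
    (hφ : ∀ i, ContDiff ℝ 2 (φ i)) (hη : ∀ i, Differentiable ℝ (η i)) (hξ : Differentiable ℝ ξ)
    (hEL : ∀ i, ∑ ν, pd (P i ν) ν x = Lu i + ∑ ν, F ν * P i ν x)
    (hchain : ∀ ν, pd ℓ ν x = Lx ν + ∑ i, pd (φ i) ν x * Lu i
      + ∑ i, ∑ μ, pd (pd (φ i) μ) ν x * P i μ x + F ν * ℓ x)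
    (hinv : ∑ ν, Lx ν * ξ x ν + ∑ i, Lu i * η i x
      + ∑ ν, ∑ i, P i ν x * (pd (η i) ν x - ∑ μ, pd (φ i) μ x * pd (fun y => ξ y μ) ν x)
      + ℓ x * ∑ ν, pd (fun y => ξ y ν) ν x = 0) :
    ∑ ν, pd (fun y => ∑ i, P i ν y * (η i y - ∑ μ, pd (φ i) μ y * ξ y μ) + ℓ y * ξ y ν) ν x
      = ∑ ν, F ν * (∑ i, P i ν x * (η i x - ∑ μ, pd (φ i) μ x * ξ x μ) + ℓ x * ξ x ν) := by
  have hG : ∀ i μ, Differentiable ℝ (pd (φ i) μ) :=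
    fun i μ => (contDiff_pd (hφ i) μ).differentiable one_ne_zero
  have hξ' : ∀ μ, Differentiable ℝ (fun y => ξ y μ) := differentiable_pi.1 hξ
  simp (disch := intros; fun_prop) only [pd_add, pd_sub, pd_mul, pd_sum]
  simp only [hchain, ← add_assoc]
  exact noether_identity (fun i μ ν => pd_comm (hφ i) μ ν) hEL hinv

theorem sum_pd_noether_current_mul_exp_neg {Lx : Fin d → ℝ} {Lu : Fin N → ℝ}
    (hP : ∀ i ν, Differentiable ℝ (P i ν)) (hℓ : Differentiable ℝ ℓ)
    (hf : DifferentiableAt ℝ f x) (hφ : ∀ i, ContDiff ℝ 2 (φ i))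
    (hη : ∀ i, Differentiable ℝ (η i)) (hξ : Differentiable ℝ ξ)
    (hEL : ∀ i, ∑ ν, pd (P i ν) ν x = Lu i + ∑ ν, pd f ν x * P i ν x)
    (hchain : ∀ ν, pd ℓ ν x = Lx ν + ∑ i, pd (φ i) ν x * Lu i
      + ∑ i, ∑ μ, pd (pd (φ i) μ) ν x * P i μ x + pd f ν x * ℓ x)
    (hinv : ∑ ν, Lx ν * ξ x ν + ∑ i, Lu i * η i x
      + ∑ ν, ∑ i, P i ν x * (pd (η i) ν x - ∑ μ, pd (φ i) μ x * pd (fun y => ξ y μ) ν x)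
      + ℓ x * ∑ ν, pd (fun y => ξ y ν) ν x = 0) :
    ∑ ν, pd (fun y => ((∑ i, P i ν y * η i y) + ℓ y * ξ y ν
      - ∑ i, ∑ μ, P i ν y * pd (φ i) μ y * ξ y μ) * Real.exp (-f y)) ν x = 0 := by
  have hG : ∀ i μ, Differentiable ℝ (pd (φ i) μ) :=
    fun i μ => (contDiff_pd (hφ i) μ).differentiable one_ne_zero
  have hξ' : ∀ μ, Differentiable ℝ (fun y => ξ y μ) := differentiable_pi.1 hξ
  have hcharacteristic : ∀ ν y, (∑ i, P i ν y * η i y) + ℓ y * ξ y ν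
      - ∑ i, ∑ μ, P i ν y * pd (φ i) μ y * ξ y μ
      = ∑ i, P i ν y * (η i y - ∑ μ, pd (φ i) μ y * ξ y μ) + ℓ y * ξ y ν := by
    intro ν y
    simp only [mul_sub, mul_sum, sum_sub_distrib, mul_assoc]
    ring
  simp only [hcharacteristic]
  rw [sum_congr rfl fun ν _ => pd_mul_exp_neg (by fun_prop) hf ν, ← sum_mul, sum_sub_distrib,
    sum_pd_noether_current hP hℓ hφ hη hξ hEL hchain hinv, sub_self, zero_mul]

end Current

/-- **Generalized Noether Theorem for several fields.** Under the Herglotz field setup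
with `N` real fields `φ^i`, if each `φ^i` satisfies the generalized Euler–Lagrange
equation, the infinitesimal invariance condition holds, and the canonical gauge condition
holds, then the Noether current
`J^ν = (Σ_i L_{p^i_ν} η^i + L ξ^ν − Σ_{i,μ} L_{p^i_ν} ∂_μφ^i ξ^μ) e^{−f}`
is divergence-free. -/
theorem herglotz_generalized_noether_several_fields
    (d N : ℕ)
    (L : (Fin d → ℝ) × (Fin N → ℝ) × (Fin N → Fin d → ℝ) × (Fin d → ℝ) → ℝ)
    (hL : ContDiff ℝ 1 L)
    (φ : Fin N → (Fin d → ℝ) → ℝ) (hφ : ∀ i, ContDiff ℝ 2 (φ i))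
    (s : (Fin d → ℝ) → (Fin d → ℝ)) (hs : ContDiff ℝ 1 s)
    (f : (Fin d → ℝ) → ℝ) (hf : ContDiff ℝ 1 f)
    (z : (Fin d → ℝ) → (Fin d → ℝ) × (Fin N → ℝ) × (Fin N → Fin d → ℝ) × (Fin d → ℝ))
    (hz : z = fun x => (x, fun i => φ i x, fun i ν => pd (φ i) ν x, s x))
    (herglotz : ∀ x, (∑ ν, pd (fun y => s y ν) ν x) = L (z x))
    (hgrad : ∀ (ν : Fin d) (x : Fin d → ℝ), pLs L ν (z x) = pd f ν x)
    (hdiff : ∀ (i : Fin N) (ν : Fin d), Differentiable ℝ (fun x => pLp L i ν (z x)))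
    (hEL : ∀ (i : Fin N) (x : Fin d → ℝ),
      pLu L i (z x) - (∑ ν, pd (fun y => pLp L i ν (z y)) ν x)
        + (∑ ν, pd f ν x * pLp L i ν (z x)) = 0)
    (ξ : (Fin d → ℝ) → (Fin d → ℝ)) (hξ : ContDiff ℝ 1 ξ)
    (η : Fin N → (Fin d → ℝ) → ℝ) (hη : ∀ i, ContDiff ℝ 1 (η i))
    (hinv : ∀ x, (∑ ν, pLx L ν (z x) * ξ x ν) + (∑ i, pLu L i (z x) * η i x)
      + (∑ ν, ∑ i, pLp L i ν (z x)
          * (pd (η i) ν x - ∑ μ, pd (φ i) μ x * pd (fun y => ξ y μ) ν x))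
      + L (z x) * (∑ ν, pd (fun y => ξ y ν) ν x) = 0)
    (hgauge : ∀ (ν : Fin d) (x : Fin d → ℝ),
      pd f ν x * (∑ μ, pd (fun y => s y μ) μ x) = ∑ μ, pd f μ x * pd (fun y => s y μ) ν x)
    (J : Fin d → (Fin d → ℝ) → ℝ)
    (hJ : J = fun ν y =>
      ((∑ i, pLp L i ν (z y) * η i y) + L (z y) * ξ y ν
        - ∑ i, ∑ μ, pLp L i ν (z y) * pd (φ i) μ y * ξ y μ) * Real.exp (-f y)) :
    ∀ x, (∑ ν, pd (J ν) ν x) = 0 := by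
  obtain rfl : z = prolongation φ s := hz
  subst hJ
  intro x
  have hL' : Differentiable ℝ L := hL.differentiable one_ne_zero
  have hs' : Differentiable ℝ s := hs.differentiable one_ne_zero
  have hchain : ∀ ν, pd (fun y => L (prolongation φ s y)) ν x
      = pLx L ν (prolongation φ s x) + ∑ i, pd (φ i) ν x * pLu L i (prolongation φ s x)
        + ∑ i, ∑ μ, pd (pd (φ i) μ) ν x * pLp L i μ (prolongation φ s x)
        + pd f ν x * L (prolongation φ s x) := by
    intro ν
    rw [pd_comp_prolongation (hL' _) hφ hs', ← herglotz x, hgauge]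
    simp only [hgrad, mul_comm]
  exact sum_pd_noether_current_mul_exp_neg hdiff
    (hL'.comp (differentiable_prolongation hφ hs')) (hf.differentiable one_ne_zero x)
    hφ (fun i => (hη i).differentiable one_ne_zero) (hξ.differentiable one_ne_zero)
    (fun i => by linarith [hEL i x]) hchain (hinv x)
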